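/- Let a node a and finitely many nodes b ∈ B have mutually independent random positions in the Euclidean plane. The position X_a of node a has law Σ_j P_j(a)·U(S_j(a)), a finite mixture of uniform distributions on axis-aligned squares S_j(a) of side C_j(a) > 0 with nonnegative weights P_j(a) summing to 1; similarly each X_b has law Σ_k P_k(b)·U(S_k(b)) over squares S_k(b) of side C_k(b) > 0. Let K > 0 and assume that for every pair of squares (S_j(a), S_k(b)) the separation hypothesis holds: for every y ∈ S_k(b), if y ∈ S_j(a) then the closed Euclidean ball of radius K centered at y is contained in S_j(a), and if y ∉ S_j(a) then that ball is disjoint from S_j(a). Then the expected number of nodes b ∈ B with dist(X_a, X_b) ≤ K equals Σ_{b∈B} Σ_j Σ_k P_j(a)·P_k(b)·π·K²·vol(S_j(a) ∩ S_k(b)) / (C_j(a)²·C_k(b)²). -/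

import Mathlib

open MeasureTheory ProbabilityTheory Real Set

/-- An axis-aligned square `[x₀, x₀+C] × [y₀, y₀+C]` in the Euclidean plane. -/
def axisSquare (x₀ y₀ C : ℝ) : Set (EuclideanSpace ℝ (Fin 2)) :=
  {p | p 0 ∈ Set.Icc x₀ (x₀ + C) ∧ p 1 ∈ Set.Icc y₀ (y₀ + C)}

open scoped ENNReal

/-
By linearity of expectation the expected degree is `∑_b P(dist(X_a, X_b) ≤ K)`. By independence
each term is the product of the two position laws evaluated on `{(x, y) | dist x y ≤ K}`, and this
splits bilinearly over the mixture components into pairs of uniform laws on squares `S`, `T`.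
For `y ∈ T`, separation forces the ball `closedBall y K` to lie inside `S` or outside it, so the
section of the event at `y` has volume `π K²` when `y ∈ S ∩ T` and `0` otherwise.
-/

def IsBallSeparated {E : Type*} [PseudoMetricSpace E] (K : ℝ) (S T : Set E) : Prop :=
  ∀ y ∈ T, (y ∈ S → Metric.closedBall y K ⊆ S) ∧ (y ∉ S → Disjoint (Metric.closedBall y K) S)

namespace MeasureTheory.Measure

section Mixture

variable {α β ι κ : Type*} [MeasurableSpace α] [MeasurableSpace β] [Fintype ι] [Fintype κ]

lemma sum_smul_prod_sum_smul (c : ι → ℝ≥0∞) (d : κ → ℝ≥0∞)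
    (μ : ι → Measure α) (ν : κ → Measure β) [∀ j, SFinite (μ j)] [∀ k, SFinite (ν k)] :
    (∑ j, c j • μ j).prod (∑ k, d k • ν k) = ∑ j, ∑ k, (c j * d k) • (μ j).prod (ν k) := by
  simp_rw [← sum_fintype, prod_sum, prod_smul_left, prod_smul_right, smul_smul, sum_fintype,
    Fintype.sum_prod_type]

lemma real_sum_ofReal_smul_prod_sum_ofReal_smul {p : ι → ℝ} {q : κ → ℝ} (hp : ∀ j, 0 ≤ p j)
    (hq : ∀ k, 0 ≤ q k) (μ : ι → Measure α) (ν : κ → Measure β) [∀ j, IsFiniteMeasure (μ j)]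
    [∀ k, IsFiniteMeasure (ν k)] (E : Set (α × β)) :
    ((∑ j, ENNReal.ofReal (p j) • μ j).prod (∑ k, ENNReal.ofReal (q k) • ν k)).real E =
      ∑ j, ∑ k, p j * q k * ((μ j).prod (ν k)).real E := by
  have hfin : ∀ j k, ENNReal.ofReal (p j) * ENNReal.ofReal (q k) * (μ j).prod (ν k) E ≠ ∞ :=
    fun j k => ENNReal.mul_ne_top (by finiteness) (measure_ne_top _ _)
  simp only [sum_smul_prod_sum_smul, measureReal_def, finsetSum_apply, smul_apply, smul_eq_mul]
  rw [ENNReal.toReal_sum fun j _ => ENNReal.sum_ne_top.2 fun k _ => hfin j k]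
  refine Finset.sum_congr rfl fun j _ => ?_
  rw [ENNReal.toReal_sum fun k _ => hfin j k]
  simp [hp, hq]

end Mixture

lemma prod_cond_setOf_dist_le {E : Type*} [NormedAddCommGroup E] [MeasurableSpace E]
    [BorelSpace E] [SecondCountableTopology E] (μ : Measure E) [μ.IsAddHaarMeasure]
    {S T : Set E} {K : ℝ} (hS : MeasurableSet S) (hT : MeasurableSet T)
    (hsep : IsBallSeparated K S T) :
    (cond μ S).prod (cond μ T) {p | dist p.1 p.2 ≤ K} =
      (μ S)⁻¹ * (μ T)⁻¹ * (μ (Metric.closedBall 0 K) * μ (S ∩ T)) := by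
  rw [prod_apply_symm (measurableSet_le (by fun_prop) measurable_const)]
  have hsection : ∀ y ∈ T, cond μ S ((fun x => (x, y)) ⁻¹' {p | dist p.1 p.2 ≤ K}) =
      S.indicator (fun _ => (μ S)⁻¹ * μ (Metric.closedBall 0 K)) y := by
    intro y hy
    rw [cond_apply hS]
    change (μ S)⁻¹ * μ (S ∩ Metric.closedBall y K) = _
    by_cases hyS : y ∈ S
    · rw [Set.indicator_of_mem hyS, Set.inter_eq_self_of_subset_right ((hsep y hy).1 hyS),
        addHaar_closedBall_center]
    · rw [Set.indicator_of_notMem hyS,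
        Set.disjoint_iff_inter_eq_empty.mp ((hsep y hy).2 hyS).symm, measure_empty, mul_zero]
  rw [ProbabilityTheory.cond, lintegral_smul_measure, setLIntegral_congr_fun hT hsection,
    lintegral_indicator_const hS, restrict_apply hS, smul_eq_mul]
  ring

end MeasureTheory.Measure

lemma ProbabilityTheory.IndepFun.measureReal_mk_preimage {Ω α β : Type*} [MeasurableSpace Ω]
    [MeasurableSpace α] [MeasurableSpace β] {P : Measure Ω} [IsFiniteMeasure P]
    {X : Ω → α} {Y : Ω → β} (hXY : IndepFun X Y P) (hX : Measurable X) (hY : Measurable Y)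
    {E : Set (α × β)} (hE : MeasurableSet E) :
    P.real ((fun ω => (X ω, Y ω)) ⁻¹' E) = ((P.map X).prod (P.map Y)).real E := by
  rw [← (indepFun_iff_map_prod_eq_prod_map_map hX.aemeasurable hY.aemeasurable).1 hXY,
    map_measureReal_apply (hX.prodMk hY) hE]

lemma MeasureTheory.integral_card_filter {Ω ι : Type*} [MeasurableSpace Ω] (P : Measure Ω)
    [IsFiniteMeasure P] [Fintype ι] (p : ι → Ω → Prop) [∀ i ω, Decidable (p i ω)]
    (hp : ∀ i, MeasurableSet {ω | p i ω}) :
    ∫ ω, ((Finset.univ.filter fun i => p i ω).card : ℝ) ∂P = ∑ i, P.real {ω | p i ω} := by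
  have hcard : ∀ ω, ((Finset.univ.filter fun i => p i ω).card : ℝ) =
      ∑ i, {ω | p i ω}.indicator 1 ω := by
    intro ω
    simp only [Finset.natCast_card_filter, Set.indicator_apply, Set.mem_ofPred_eq, Pi.one_apply]
  simp_rw [hcard]
  rw [integral_finsetSum _ fun i _ => (integrable_const 1).indicator (hp i)]
  simp_rw [integral_indicator_one (hp _)]

lemma measurableSet_axisSquare (x y C : ℝ) : MeasurableSet (axisSquare x y C) :=
  (measurableSet_Icc.preimage (by fun_prop)).inter (measurableSet_Icc.preimage (by fun_prop))

lemma volume_axisSquare (x y C : ℝ) : volume (axisSquare x y C) = ENNReal.ofReal C ^ 2 := by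
  have hpi : axisSquare x y C = (MeasurableEquiv.toLp 2 (Fin 2 → ℝ)).symm ⁻¹'
      Set.univ.pi fun i => Set.Icc (![x, y] i) (![x, y] i + C) := by
    ext p
    simp only [axisSquare, Set.mem_preimage, Set.mem_pi, Set.mem_univ, forall_true_left,
      Set.mem_ofPred_eq, Fin.forall_fin_two]
    rfl
  rw [hpi, (EuclideanSpace.volume_preserving_symm_measurableEquiv_toLp (Fin 2)).measure_preimage
    (MeasurableSet.univ_pi fun _ => measurableSet_Icc).nullMeasurableSet, volume_pi_pi]
  simp [Real.volume_Icc, sq]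

lemma measureReal_prod_cond_axisSquare_setOf_dist_le {x y C x' y' C' K : ℝ} (hK : 0 ≤ K)
    (hC : 0 ≤ C) (hC' : 0 ≤ C')
    (hsep : IsBallSeparated K (axisSquare x y C) (axisSquare x' y' C')) :
    ((cond volume (axisSquare x y C)).prod (cond volume (axisSquare x' y' C'))).real
        {p | dist p.1 p.2 ≤ K} =
      π * K ^ 2 * volume.real (axisSquare x y C ∩ axisSquare x' y' C') / (C ^ 2 * C' ^ 2) := by
  rw [measureReal_def, Measure.prod_cond_setOf_dist_le _ (measurableSet_axisSquare _ _ _)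
    (measurableSet_axisSquare _ _ _) hsep, volume_axisSquare, volume_axisSquare,
    EuclideanSpace.volume_closedBall_fin_two]
  simp only [ENNReal.toReal_mul, ENNReal.toReal_inv, ENNReal.toReal_pow,
    ENNReal.toReal_ofReal hC, ENNReal.toReal_ofReal hC', ENNReal.toReal_ofReal hK,
    ENNReal.toReal_ofReal pi_pos.le, measureReal_def]
  ring

theorem stmt1_general {Ω : Type*} [MeasurableSpace Ω] (P : Measure Ω) [IsProbabilityMeasure P]
    (B : Type*) [Fintype B] (K : ℝ) (hK : 0 < K)
    -- communities of node a
    (na : ℕ) (Pa : Fin na → ℝ) (xa ya Ca : Fin na → ℝ)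
    (hCa : ∀ j, 0 < Ca j) (hPa0 : ∀ j, 0 ≤ Pa j)
    -- communities of the nodes b ∈ B
    (nb : B → ℕ) (Pb : ∀ b, Fin (nb b) → ℝ) (xb yb Cb : ∀ b, Fin (nb b) → ℝ)
    (hCb : ∀ b k, 0 < Cb b k) (hPb0 : ∀ b k, 0 ≤ Pb b k)
    -- separation hypothesis for every pair of squares
    (hsep : ∀ (b : B) (j : Fin na) (k : Fin (nb b)),
      ∀ y ∈ axisSquare (xb b k) (yb b k) (Cb b k),
        (y ∈ axisSquare (xa j) (ya j) (Ca j) →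
          Metric.closedBall y K ⊆ axisSquare (xa j) (ya j) (Ca j)) ∧
        (y ∉ axisSquare (xa j) (ya j) (Ca j) →
          Disjoint (Metric.closedBall y K) (axisSquare (xa j) (ya j) (Ca j))))
    -- positions
    (Xa : Ω → EuclideanSpace ℝ (Fin 2)) (Xb : B → Ω → EuclideanSpace ℝ (Fin 2))
    (hXa : Measurable Xa) (hXb : ∀ b, Measurable (Xb b))
    -- mutual independence of all the positions
    (hind : iIndepFun
      (fun o => Option.elim o Xa Xb) P)
    -- laws: finite mixtures of uniform distributions on the squares
    (hlawa : P.map Xa =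
      ∑ j, ENNReal.ofReal (Pa j) •
        ProbabilityTheory.cond volume (axisSquare (xa j) (ya j) (Ca j)))
    (hlawb : ∀ b, P.map (Xb b) =
      ∑ k, ENNReal.ofReal (Pb b k) •
        ProbabilityTheory.cond volume (axisSquare (xb b k) (yb b k) (Cb b k))) :
    ∫ ω, ((Finset.univ.filter fun b : B => dist (Xa ω) (Xb b ω) ≤ K).card : ℝ) ∂P =
      ∑ b : B, ∑ j, ∑ k,
        Pa j * Pb b k * (π * K ^ 2 *
          (volume (axisSquare (xa j) (ya j) (Ca j) ∩
            axisSquare (xb b k) (yb b k) (Cb b k))).toReal) /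
          ((Ca j) ^ 2 * (Cb b k) ^ 2) := by
  have hdist : MeasurableSet {p : EuclideanSpace ℝ (Fin 2) × EuclideanSpace ℝ (Fin 2) |
      dist p.1 p.2 ≤ K} := measurableSet_le (by fun_prop) measurable_const
  calc _ = ∑ b, P.real {ω | dist (Xa ω) (Xb b ω) ≤ K} :=
        integral_card_filter P (fun b ω => dist (Xa ω) (Xb b ω) ≤ K)
          fun b => measurableSet_le (by fun_prop) measurable_const
    _ = ∑ b, ((P.map Xa).prod (P.map (Xb b))).real {p | dist p.1 p.2 ≤ K} :=
        Finset.sum_congr rfl fun b _ =>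
          (hind.indepFun (Option.some_ne_none b).symm).measureReal_mk_preimage
            hXa (hXb b) hdist
    _ = _ := by
        refine Finset.sum_congr rfl fun b _ => ?_
        rw [hlawa, hlawb, Measure.real_sum_ofReal_smul_prod_sum_ofReal_smul hPa0 (hPb0 b)]
        refine Finset.sum_congr rfl fun j _ => Finset.sum_congr rfl fun k _ => ?_
        rw [measureReal_prod_cond_axisSquare_setOf_dist_le hK.le (hCa j).le (hCb b k).le
          (hsep b j k), measureReal_def]
        ring

/-- The average node degree of node `a`: the expected number of nodes `b ∈ B` within
communication range `K` of node `a`, when all positions are mutually independent and each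
node's position law is a finite mixture of uniform distributions on axis-aligned squares,
equals `Σ_b Σ_j Σ_k P_j(a) P_k(b) π K² vol(S_j(a) ∩ S_k(b)) / (C_j(a)² C_k(b)²)`. -/
theorem stmt1 {Ω : Type*} [MeasurableSpace Ω] (P : Measure Ω) [IsProbabilityMeasure P]
    (B : Type*) [Fintype B] (K : ℝ) (hK : 0 < K)
    -- communities of node a
    (na : ℕ) (Pa : Fin na → ℝ) (xa ya Ca : Fin na → ℝ)
    (hCa : ∀ j, 0 < Ca j) (hPa0 : ∀ j, 0 ≤ Pa j) (hPa1 : ∑ j, Pa j = 1)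
    -- communities of the nodes b ∈ B
    (nb : B → ℕ) (Pb : ∀ b, Fin (nb b) → ℝ) (xb yb Cb : ∀ b, Fin (nb b) → ℝ)
    (hCb : ∀ b k, 0 < Cb b k) (hPb0 : ∀ b k, 0 ≤ Pb b k) (hPb1 : ∀ b, ∑ k, Pb b k = 1)
    -- separation hypothesis for every pair of squares
    (hsep : ∀ (b : B) (j : Fin na) (k : Fin (nb b)),
      ∀ y ∈ axisSquare (xb b k) (yb b k) (Cb b k),
        (y ∈ axisSquare (xa j) (ya j) (Ca j) →
          Metric.closedBall y K ⊆ axisSquare (xa j) (ya j) (Ca j)) ∧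
        (y ∉ axisSquare (xa j) (ya j) (Ca j) →
          Disjoint (Metric.closedBall y K) (axisSquare (xa j) (ya j) (Ca j))))
    -- positions
    (Xa : Ω → EuclideanSpace ℝ (Fin 2)) (Xb : B → Ω → EuclideanSpace ℝ (Fin 2))
    (hXa : Measurable Xa) (hXb : ∀ b, Measurable (Xb b))
    -- mutual independence of all the positions
    (hind : iIndepFun
      (fun o => Option.elim o Xa Xb) P)
    -- laws: finite mixtures of uniform distributions on the squares
    (hlawa : P.map Xa =
      ∑ j, ENNReal.ofReal (Pa j) •
        ProbabilityTheory.cond volume (axisSquare (xa j) (ya j) (Ca j)))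
    (hlawb : ∀ b, P.map (Xb b) =
      ∑ k, ENNReal.ofReal (Pb b k) •
        ProbabilityTheory.cond volume (axisSquare (xb b k) (yb b k) (Cb b k))) :
    ∫ ω, ((Finset.univ.filter fun b : B => dist (Xa ω) (Xb b ω) ≤ K).card : ℝ) ∂P =
      ∑ b : B, ∑ j, ∑ k,
        Pa j * Pb b k * (π * K ^ 2 *
          (volume (axisSquare (xa j) (ya j) (Ca j) ∩
            axisSquare (xb b k) (yb b k) (Cb b k))).toReal) /
          ((Ca j) ^ 2 * (Cb b k) ^ 2) :=
  stmt1_general P B K hK na Pa xa ya Ca hCa hPa0 nb Pb xb yb Cb hCb hPb0 hsep Xa Xb hXa hXb hind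
    hlawa hlawb
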